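/- Let T > 0, a > 0, σ > 0. Suppose f : [0,∞) → [0,∞) is absolutely continuous and T-periodic, g, h : [0,∞) → [0,∞) are T-periodic with ∫₀ᵀ g(s) ds ≤ α and ∫₀ᵀ h(s) ds ≤ β, and for all 0 ≤ t₀ < t we have f(t) - f(t₀) + a ∫_{t₀}^{t} f(s)^{1+σ} ds ≤ ∫_{t₀}^{t} g(s) f(s) ds + ∫_{t₀}^{t} h(s) ds. Then there exists a constant C depending only on a, α, β, T such that sup_{t∈(0,T)} f(t) + a ∫₀ᵀ f(t)^{1+σ} dt ≤ C. -/

import Mathlib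

open MeasureTheory Set intervalIntegral

/-!
Dropping the dissipative term, `f t ≤ f t₀ + ∫ g f + ∫ h` for `t₀ ≤ t`. On a stretch where
`∫ g ≤ 1/2`, comparing with the maximum of `f` on it gives `f + 2β ≤ 2 (f(start) + 2β)`; one period
splits into at most `⌈2α⌉₊ + 1` such stretches, so starting from the minimum point `w` of `f`,
`sup f ≤ A (f w + 2β)` with `A = 2 ^ (⌈2α⌉₊ + 1)`. Integrating over a full period, where `f`
returns to its initial value, gives `a ∫ f^(1+σ) ≤ α A (f w + 2β) + β`, while the left side is at
least `a T (f w)^(1+σ)`; superlinear growth then bounds `f w`, hence everything.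
-/

theorem continuous_of_sub_eq_integral {f f' : ℝ → ℝ}
    (hf'i : ∀ s t : ℝ, IntervalIntegrable f' volume s t)
    (hf : ∀ s t : ℝ, f t - f s = ∫ x in s..t, f' x) : Continuous f := by
  have : f = fun t => f 0 + ∫ x in (0 : ℝ)..t, f' x := funext fun t => by linarith [hf 0 t]
  rw [this]
  exact continuous_const.add (continuous_primitive hf'i 0)

theorem integral_mul_le_integral_mul_of_le {g F : ℝ → ℝ} {p q S : ℝ} (hpq : p ≤ q)
    (hg0 : ∀ t, 0 ≤ g t) (hgi : IntervalIntegrable g volume p q)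
    (hFc : ContinuousOn F (Icc p q)) (hFS : ∀ t ∈ Icc p q, F t ≤ S) :
    ∫ s in p..q, g s * F s ≤ (∫ s in p..q, g s) * S := by
  rw [← intervalIntegral.integral_mul_const]
  refine integral_mono_on hpq (hgi.mul_continuousOn ?_) (hgi.mul_const S)
    fun t ht => mul_le_mul_of_nonneg_left (hFS t ht) (hg0 t)
  rwa [uIcc_of_le hpq]

theorem sub_mul_rpow_le_integral_rpow_of_isMinOn {F : ℝ → ℝ} {p q w r : ℝ} (hpq : p ≤ q)
    (hF0 : ∀ t, 0 ≤ F t) (hFc : Continuous F) (hr : 0 ≤ r) (hw : IsMinOn F (Icc p q) w) :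
    (q - p) * F w ^ r ≤ ∫ t in p..q, F t ^ r := by
  have : ∫ _ in p..q, F w ^ r ≤ ∫ t in p..q, F t ^ r :=
    integral_mono_on hpq intervalIntegrable_const
      ((hFc.rpow_const fun _ => Or.inr hr).intervalIntegrable p q)
      fun t ht => Real.rpow_le_rpow (hF0 w) (hw ht) hr
  rwa [intervalIntegral.integral_const, smul_eq_mul] at this

theorem le_max_one_rpow_inv_of_mul_rpow_le {m c K L σ : ℝ} (hm : 0 ≤ m) (hc : 0 < c)
    (hσ : 0 < σ) (hK : 0 ≤ K) (hL : 0 ≤ L) (h : c * m ^ (1 + σ) ≤ K * m + L) :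
    m ≤ max 1 (((K + L) / c) ^ σ⁻¹) := by
  rcases le_or_gt m 1 with hm1 | hm1
  · exact le_max_of_le_left hm1
  refine le_max_of_le_right ((Real.le_rpow_inv_iff_of_pos hm (by positivity) hσ).2 ?_)
  rw [le_div_iff₀ hc]
  have hm0 : 0 < m := one_pos.trans hm1
  rw [Real.rpow_add hm0, Real.rpow_one] at h
  refine le_of_mul_le_mul_left ?_ hm0
  nlinarith

section Gronwall

variable {F g h : ℝ → ℝ} {β : ℝ}
  (hF0 : ∀ t, 0 ≤ F t) (hFc : Continuous F) (hg0 : ∀ t, 0 ≤ g t) (hh0 : ∀ t, 0 ≤ h t)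
  (hgi : ∀ s t, IntervalIntegrable g volume s t) (hhi : ∀ s t, IntervalIntegrable h volume s t)
  (hineq : ∀ t₀ t : ℝ, 0 ≤ t₀ → t₀ < t →
    F t - F t₀ ≤ (∫ s in t₀..t, g s * F s) + ∫ s in t₀..t, h s)
include hF0 hFc hg0 hh0 hgi hhi hineq

theorem add_le_two_mul_of_integral_le_half {p q : ℝ} (hp : 0 ≤ p) (hpq : p ≤ q)
    (hg : ∫ s in p..q, g s ≤ 1 / 2) (hh : ∫ s in p..q, h s ≤ β) :
    ∀ t ∈ Icc p q, F t + 2 * β ≤ 2 * (F p + 2 * β) := by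
  intro t ht
  have hβ : 0 ≤ β := (integral_nonneg hpq fun x _ => hh0 x).trans hh
  obtain ⟨w, hw, hwmax⟩ := isCompact_Icc.exists_isMaxOn (nonempty_Icc.2 hpq) hFc.continuousOn
  have hFt : F t ≤ F w := hwmax ht
  suffices F w ≤ 2 * F p + 2 * β by linarith
  rcases hw.1.eq_or_lt with rfl | hpw
  · linarith [hF0 p]
  have hgw : (∫ s in p..w, g s * F s) ≤ (∫ s in p..w, g s) * F w :=
    integral_mul_le_integral_mul_of_le hw.1 hg0 (hgi p w) hFc.continuousOn
      fun s hs => hwmax (Icc_subset_Icc_right hw.2 hs)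
  have hg' : ∫ s in p..w, g s ≤ 1 / 2 :=
    (integral_mono_interval le_rfl hw.1 hw.2 (.of_forall hg0) (hgi p q)).trans hg
  have hh' : ∫ s in p..w, h s ≤ β :=
    (integral_mono_interval le_rfl hw.1 hw.2 (.of_forall hh0) (hhi p q)).trans hh
  nlinarith [hineq p w hp hpw, hF0 w]

theorem add_le_two_pow_mul_of_integral_le (N : ℕ) {p q : ℝ} (hp : 0 ≤ p) (hpq : p ≤ q)
    (hg : ∫ s in p..q, g s ≤ (N + 1) / 2) (hh : ∫ s in p..q, h s ≤ β) :
    ∀ t ∈ Icc p q, F t + 2 * β ≤ 2 ^ (N + 1) * (F p + 2 * β) := by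
  intro t ht
  have hβ : 0 ≤ β := (integral_nonneg hpq fun x _ => hh0 x).trans hh
  induction N generalizing p with
  | zero =>
    simpa using add_le_two_mul_of_integral_le_half hF0 hFc hg0 hh0 hgi hhi hineq hp hpq
      (by simpa using hg) hh t ht
  | succ N ih =>
    have hFp : 0 ≤ F p + 2 * β := by linarith [hF0 p]
    have h2N : (2 : ℝ) ≤ 2 ^ (N + 1 + 1) := le_self_pow₀ one_le_two (by omega)
    by_cases hg_half : ∫ s in p..q, g s ≤ 1 / 2
    · calc F t + 2 * β ≤ 2 * (F p + 2 * β) :=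
            add_le_two_mul_of_integral_le_half hF0 hFc hg0 hh0 hgi hhi hineq hp hpq hg_half hh t ht
        _ ≤ 2 ^ (N + 1 + 1) * (F p + 2 * β) := by gcongr
    push Not at hg_half
    obtain ⟨r, hr, hgr⟩ : ∃ r ∈ Icc p q, ∫ s in p..r, g s = 1 / 2 := by
      have := intermediate_value_Icc hpq (continuous_primitive hgi p).continuousOn
      simp only [integral_same] at this
      exact this ⟨by norm_num, hg_half.le⟩
    have hpr := add_le_two_mul_of_integral_le_half hF0 hFc hg0 hh0 hgi hhi hineq hp hr.1
      hgr.le ((integral_mono_interval le_rfl hr.1 hr.2 (.of_forall hh0) (hhi p q)).trans hh)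
    rcases le_total t r with htr | hrt
    · calc F t + 2 * β ≤ 2 * (F p + 2 * β) := hpr t ⟨ht.1, htr⟩
        _ ≤ 2 ^ (N + 1 + 1) * (F p + 2 * β) := by gcongr
    have hgrq : ∫ s in r..q, g s ≤ (N + 1) / 2 := by
      rw [← integral_interval_sub_left (hgi p q) (hgi p r)]
      push_cast at hg
      linarith
    calc F t + 2 * β ≤ 2 ^ (N + 1) * (F r + 2 * β) :=
          ih (hp.trans hr.1) hr.2 hgrq
            ((integral_mono_interval hr.1 hr.2 le_rfl (.of_forall hh0) (hhi p q)).trans hh)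
            ⟨hrt, ht.2⟩
      _ ≤ 2 ^ (N + 1) * (2 * (F p + 2 * β)) := by gcongr; exact hpr r ⟨hr.1, le_rfl⟩
      _ = 2 ^ (N + 1 + 1) * (F p + 2 * β) := by ring

theorem Function.Periodic.add_le_two_pow_mul {T α : ℝ} (hT : 0 < T) (hFper : Function.Periodic F T)
    (hgper : Function.Periodic g T) (hhper : Function.Periodic h T)
    (hgα : ∫ s in (0:ℝ)..T, g s ≤ α) (hhβ : ∫ s in (0:ℝ)..T, h s ≤ β) {w : ℝ} (hw : 0 ≤ w)
    (t : ℝ) : F t + 2 * β ≤ 2 ^ (⌈2 * α⌉₊ + 1) * (F w + 2 * β) := by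
  obtain ⟨y, hy, hFy⟩ := hFper.exists_mem_Ico hT t w
  rw [hFy]
  refine add_le_two_pow_mul_of_integral_le hF0 hFc hg0 hh0 hgi hhi hineq ⌈2 * α⌉₊ hw
    (le_add_of_nonneg_right hT.le) ?_ ?_ y (Ico_subset_Icc_self hy)
  · rw [hgper.intervalIntegral_add_eq w 0, zero_add]
    linarith [Nat.le_ceil (2 * α)]
  · rwa [hhper.intervalIntegral_add_eq w 0, zero_add]

end Gronwall

/-- Periodic Gronwall-type inequality (Lemma 2.2, first part).
The constant `C` depends only on `a, α, β, T` (it is chosen before the functions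
`f, g, h`). Absolute continuity of `f` is encoded via the fundamental theorem of
calculus: there is a locally integrable `f'` with `f t - f s = ∫ f'`. -/
theorem stmt_1 (T a σ α β : ℝ) (hT : 0 < T) (ha : 0 < a) (hσ : 0 < σ)
    (hα : 0 ≤ α) (hβ : 0 ≤ β) :
    ∃ C : ℝ, 0 < C ∧
      ∀ f g h f' : ℝ → ℝ,
        (∀ t, 0 ≤ f t) → (∀ t, 0 ≤ g t) → (∀ t, 0 ≤ h t) →
        Function.Periodic f T → Function.Periodic g T → Function.Periodic h T →
        (∀ s t : ℝ, IntervalIntegrable f' volume s t) →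
        (∀ s t : ℝ, f t - f s = ∫ x in s..t, f' x) →
        IntervalIntegrable g volume 0 T →
        IntervalIntegrable h volume 0 T →
        ((∫ s in (0:ℝ)..T, g s) ≤ α) →
        ((∫ s in (0:ℝ)..T, h s) ≤ β) →
        (∀ t₀ t : ℝ, 0 ≤ t₀ → t₀ < t →
          f t - f t₀ + a * ∫ s in t₀..t, (f s) ^ (1 + σ)
            ≤ (∫ s in t₀..t, g s * f s) + ∫ s in t₀..t, h s) →
        (⨆ t ∈ Ioo (0:ℝ) T, f t) + a * ∫ t in (0:ℝ)..T, (f t) ^ (1 + σ) ≤ C := by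
  set A : ℝ := 2 ^ (⌈2 * α⌉₊ + 1)
  set M : ℝ := max 1 (((α * A + (α * A * (2 * β) + β)) / (a * T)) ^ σ⁻¹)
  refine ⟨(1 + α) * (A * (M + 2 * β)) + β, by positivity, ?_⟩
  intro f g h f' hf0 hg0 hh0 hfper hgper hhper hf'i hf' hgi hhi hgα hhβ hineq
  have hfc : Continuous f := continuous_of_sub_eq_integral hf'i hf'
  have hgi := hgper.intervalIntegrable₀ hT.ne' hgi
  have hhi := hhper.intervalIntegrable₀ hT.ne' hhi
  have hineq' : ∀ t₀ t : ℝ, 0 ≤ t₀ → t₀ < t →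
      f t - f t₀ ≤ (∫ s in t₀..t, g s * f s) + ∫ s in t₀..t, h s := fun t₀ t h₀ hlt => by
    nlinarith [hineq t₀ t h₀ hlt,
      integral_nonneg (μ := volume) hlt.le fun s _ => Real.rpow_nonneg (hf0 s) (1 + σ)]
  obtain ⟨w, hw, hwmin⟩ := isCompact_Icc.exists_isMinOn (nonempty_Icc.2 hT.le) hfc.continuousOn
  have hbound : ∀ t, f t ≤ A * (f w + 2 * β) := fun t => by
    linarith [hfper.add_le_two_pow_mul hf0 hfc hg0 hh0 hgi hhi hineq' hT hgper hhper hgα hhβ hw.1 t]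
  have henergy : a * ∫ t in (0:ℝ)..T, f t ^ (1 + σ) ≤ α * (A * (f w + 2 * β)) + β := by
    have hperiod := hineq 0 T le_rfl hT
    rw [hfper.eq, sub_self, zero_add] at hperiod
    have hgf := integral_mul_le_integral_mul_of_le hT.le hg0 (hgi 0 T) hfc.continuousOn
      fun t _ => hbound t
    have hS : 0 ≤ A * (f w + 2 * β) := (hf0 0).trans (hbound 0)
    nlinarith [mul_le_mul_of_nonneg_right hgα hS]
  have hmin := sub_mul_rpow_le_integral_rpow_of_isMinOn (r := 1 + σ) hT.le hf0 hfc
    (by positivity) hwmin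
  rw [sub_zero] at hmin
  have hwM : f w ≤ M := le_max_one_rpow_inv_of_mul_rpow_le (hf0 w) (by positivity) hσ
    (by positivity) (by positivity) (by nlinarith)
  have hsup : (⨆ t ∈ Ioo (0:ℝ) T, f t) ≤ A * (M + 2 * β) :=
    Real.iSup_le (fun t => Real.iSup_le (fun _ => (hbound t).trans (by gcongr)) (by positivity))
      (by positivity)
  have hαS : α * (A * (f w + 2 * β)) ≤ α * (A * (M + 2 * β)) := by gcongr
  linarith
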